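/- Fix two distinct points A, B ∈ ℝ³ and let p₂ = α_AA δ_A⊗δ_A + α_AB δ_A⊗δ_B + α_BA δ_B⊗δ_A + α_BB δ_B⊗δ_B with coefficients satisfying α_ij ≥ 0, Σ α_ij = 1, α_AB = α_BA. If p₂ is N-density representable for every N ≥ 2, then α_AB + α_BA ≤ 2(α_AA + α_AB)(α_BB + α_BA). -/

import Mathlib

open MeasureTheory ENNReal

set_option maxHeartbeats 1000000

noncomputable section

abbrev R3 : Type := EuclideanSpace ℝ (Fin 3)

def IsSymmetricMeasure {N : ℕ} (p : Measure (Fin N → R3)) : Prop :=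
  ∀ σ : Equiv.Perm (Fin N), p.map (fun x => x ∘ σ) = p

def pairMarginal {N : ℕ} (hN : 2 ≤ N) (p : Measure (Fin N → R3)) : Measure (R3 × R3) :=
  p.map (fun x => (x ⟨0, by omega⟩, x ⟨1, by omega⟩))

def NDensityRep (N : ℕ) (hN : 2 ≤ N) (p₂ : Measure (R3 × R3)) : Prop :=
  ∃ pN : Measure (Fin N → R3), IsProbabilityMeasure pN ∧ IsSymmetricMeasure pN ∧
    pairMarginal hN pN = p₂

def twoSitePair (A B : R3) (αAA αAB αBA αBB : ℝ) : Measure (R3 × R3) :=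
  ENNReal.ofReal αAA • (Measure.dirac A).prod (Measure.dirac A)
    + ENNReal.ofReal αAB • (Measure.dirac A).prod (Measure.dirac B)
    + ENNReal.ofReal αBA • (Measure.dirac B).prod (Measure.dirac A)
    + ENNReal.ofReal αBB • (Measure.dirac B).prod (Measure.dirac B)

/- ### Auxiliary lemmas -/

lemma aux_meas1 {B : R3} : MeasurableSet {y : R3 × R3 | y.1 = B} :=
  measurable_fst (measurableSet_singleton B)

lemma aux_meas2 {B : R3} : MeasurableSet {y : R3 × R3 | y.1 = B ∧ y.2 = B} :=
  (measurable_fst (measurableSet_singleton B)).inter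
    (measurable_snd (measurableSet_singleton B))

lemma aux_tsp1 (A B : R3) (hAB : A ≠ B) (αAA αAB αBA αBB : ℝ)
    (hBA : 0 ≤ αBA) (hBB : 0 ≤ αBB) :
    twoSitePair A B αAA αAB αBA αBB {y : R3 × R3 | y.1 = B} = ENNReal.ofReal (αBA + αBB) := by
  rw [ENNReal.ofReal_add hBA hBB]
  simp [twoSitePair, Measure.dirac_prod_dirac, Measure.dirac_apply' _ aux_meas1,
    Set.indicator_apply, hAB]

lemma aux_tsp2 (A B : R3) (hAB : A ≠ B) (αAA αAB αBA αBB : ℝ) :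
    twoSitePair A B αAA αAB αBA αBB {y : R3 × R3 | y.1 = B ∧ y.2 = B} = ENNReal.ofReal αBB := by
  simp [twoSitePair, Measure.dirac_prod_dirac, Measure.dirac_apply' _ aux_meas2,
    Set.indicator_apply, hAB]

lemma aux_map_pair_eq {N : ℕ} (hN : 2 ≤ N) (pN : Measure (Fin N → R3))
    (hsym : IsSymmetricMeasure pN) (i j : Fin N) (hij : i ≠ j) :
    pN.map (fun x => (x i, x j)) = pairMarginal hN pN := by
  set i0 : Fin N := ⟨0, by omega⟩
  set i1 : Fin N := ⟨1, by omega⟩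
  have h01 : i0 ≠ i1 := by simp [i0, i1, Fin.ext_iff]
  set e1 : Equiv.Perm (Fin N) := Equiv.swap i0 i with he1
  set j1 : Fin N := e1.symm j with hj1
  have hj1ne : j1 ≠ i0 := by
    intro h
    apply hij
    have : j = e1 i0 := by rw [← h, hj1]; simp
    simp [he1, Equiv.swap_apply_left] at this
    exact this.symm ▸ rfl
  set e2 : Equiv.Perm (Fin N) := Equiv.swap i1 j1 with he2
  set σ : Equiv.Perm (Fin N) := e2.trans e1 with hσ
  have hσ0 : σ i0 = i := by
    have : e2 i0 = i0 := Equiv.swap_apply_of_ne_of_ne h01 (Ne.symm hj1ne)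
    simp [hσ, Equiv.trans_apply, this, he1, Equiv.swap_apply_left]
  have hσ1 : σ i1 = j := by
    simp [hσ, Equiv.trans_apply, he2, Equiv.swap_apply_left, hj1]
  have hmeas_comp : Measurable (fun x : Fin N → R3 => x ∘ σ) :=
    measurable_pi_lambda _ (fun k => measurable_pi_apply (σ k))
  have hmeas_pair : Measurable (fun x : Fin N → R3 => (x i0, x i1)) :=
    (measurable_pi_apply i0).prodMk (measurable_pi_apply i1)
  calc pN.map (fun x => (x i, x j))
      = pN.map ((fun x : Fin N → R3 => (x i0, x i1)) ∘ (fun x => x ∘ σ)) := by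
        congr 1
        funext x
        simp [Function.comp, hσ0, hσ1]
    _ = (pN.map (fun x => x ∘ σ)).map (fun x => (x i0, x i1)) :=
        (Measure.map_map hmeas_pair hmeas_comp).symm
    _ = pairMarginal hN pN := by rw [hsym σ]; rfl

/-- The key per-`N` second-moment inequality coming from nonnegativity of the variance of
the number of particles at the site `B`. -/
lemma aux_keyN {N : ℕ} (hN : 2 ≤ N) (B : R3) (pN : Measure (Fin N → R3))
    [IsProbabilityMeasure pN] (q b : ℝ) (hq : 0 ≤ q) (hb : 0 ≤ b)
    (h1 : ∀ i : Fin N, pN {x | x i = B} = ENNReal.ofReal q)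
    (h2 : ∀ i j : Fin N, i ≠ j → pN {x | x i = B ∧ x j = B} = ENNReal.ofReal b) :
    (N : ℝ)^2 * q^2 ≤ N * q + N * ((N:ℝ) - 1) * b := by
  set s : Fin N → Set (Fin N → R3) := fun i => {x | x i = B} with hs
  have hmeas : ∀ i, MeasurableSet (s i) := by
    intro i
    show MeasurableSet ((fun x : Fin N → R3 => x i) ⁻¹' {B})
    exact measurable_pi_apply i (measurableSet_singleton B)
  set g : Fin N → (Fin N → R3) → ℝ := fun i => (s i).indicator (1 : (Fin N → R3) → ℝ) with hg
  have hgint : ∀ i, Integrable (g i) pN := fun i =>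
    (integrable_indicator_iff (hmeas i)).2 (integrableOn_const (measure_ne_top _ _))
  have hgval : ∀ i, ∫ x, g i x ∂pN = q := by
    intro i
    rw [hg]
    simp only []
    rw [integral_indicator_one (hmeas i), measureReal_def, h1 i, ENNReal.toReal_ofReal hq]
  have hprod : ∀ i j, (fun x => g i x * g j x)
      = (s i ∩ s j).indicator (1 : (Fin N → R3) → ℝ) := by
    intro i j
    funext x
    rw [Set.inter_indicator_one]
    rfl
  have hprodint : ∀ i j, Integrable (fun x => g i x * g j x) pN := by
    intro i j
    rw [hprod]
    exact (integrable_indicator_iff ((hmeas i).inter (hmeas j))).2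
      (integrableOn_const (measure_ne_top _ _))
  have hproddiag : ∀ i, ∫ x, g i x * g i x ∂pN = q := by
    intro i
    rw [hprod, Set.inter_self, integral_indicator_one (hmeas i), measureReal_def, h1 i,
      ENNReal.toReal_ofReal hq]
  have hprodoff : ∀ i j, i ≠ j → ∫ x, g i x * g j x ∂pN = b := by
    intro i j hij
    rw [hprod, integral_indicator_one ((hmeas i).inter (hmeas j))]
    have : s i ∩ s j = {x : Fin N → R3 | x i = B ∧ x j = B} := by
      ext x; simp [hs, Set.mem_inter_iff]
    rw [this, measureReal_def, h2 i j hij, ENNReal.toReal_ofReal hb]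
  set F : (Fin N → R3) → ℝ := fun x => ∑ i, g i x with hF
  have hFint : Integrable F pN := integrable_finset_sum _ (fun i _ => hgint i)
  have hEF : ∫ x, F x ∂pN = N * q := by
    rw [hF]
    simp only []
    rw [integral_finset_sum _ (fun i _ => hgint i)]
    simp [hgval, Finset.card_univ, mul_comm]
  have hF2 : (fun x => F x ^ 2) = fun x => ∑ i, ∑ j, g i x * g j x := by
    funext x
    rw [hF]
    simp only [pow_two]
    rw [Finset.sum_mul_sum]
  have hF2int : Integrable (fun x => F x ^ 2) pN := by
    rw [hF2]
    exact integrable_finset_sum _ (fun i _ => integrable_finset_sum _ (fun j _ => hprodint i j))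
  have hEF2 : ∫ x, F x ^ 2 ∂pN = N * q + N * ((N:ℝ) - 1) * b := by
    rw [hF2, integral_finset_sum _
      (fun i _ => integrable_finset_sum _ (fun j _ => hprodint i j))]
    have hswap : ∀ i : Fin N, ∫ x, ∑ j, g i x * g j x ∂pN = ∑ j, ∫ x, g i x * g j x ∂pN :=
      fun i => integral_finset_sum _ (fun j _ => hprodint i j)
    have hinner : ∀ i : Fin N, ∑ j, ∫ x, g i x * g j x ∂pN = q + ((N:ℝ) - 1) * b := by
      intro i
      rw [← Finset.add_sum_erase _ _ (Finset.mem_univ i), hproddiag i]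
      congr 1
      rw [Finset.sum_congr rfl (fun j hj => hprodoff i j (Ne.symm (Finset.ne_of_mem_erase hj))),
        Finset.sum_const, Finset.card_erase_of_mem (Finset.mem_univ i), Finset.card_univ,
        Fintype.card_fin, nsmul_eq_mul, Nat.cast_sub (by omega)]
      push_cast
      ring
    rw [Finset.sum_congr rfl (fun i _ => (hswap i).trans (hinner i)), Finset.sum_const,
      Finset.card_univ, Fintype.card_fin, nsmul_eq_mul]
    ring
  set c : ℝ := N * q with hc
  have hvar : 0 ≤ ∫ x, (F x - c)^2 ∂pN := integral_nonneg fun x => sq_nonneg _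
  have hexp : (fun x => (F x - c)^2) = fun x => (F x ^2 - (2*c) * F x) + c^2 := by
    funext x; ring
  have hint1 : Integrable (fun x => F x ^ 2 - (2*c) * F x) pN := by
    exact hF2int.sub (hFint.const_mul (2*c))
  rw [hexp, integral_add hint1 (integrable_const _),
    integral_sub hF2int (hFint.const_mul (2*c)), integral_const_mul, hEF2, hEF,
    integral_const, probReal_univ] at hvar
  simp only [ENNReal.toReal_one, smul_eq_mul, one_mul] at hvar
  have hcsq : (N:ℝ)^2 * q^2 = c * c := by rw [hc]; ring
  nlinarith [hvar, hcsq]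

/-- If a two-site pair measure (nonnegative, normalized, symmetric coefficients) is
`N`-density representable for every `N ≥ 2`, then
`α_AB + α_BA ≤ 2(α_AA + α_AB)(α_BB + α_BA)`. -/
theorem all_N_rep_implies_quadratic_inequality (A B : R3) (hAB : A ≠ B)
    (αAA αAB αBA αBB : ℝ)
    (hAA : 0 ≤ αAA) (hAB' : 0 ≤ αAB) (hBA : 0 ≤ αBA) (hBB : 0 ≤ αBB)
    (hsum : αAA + αAB + αBA + αBB = 1) (hsymm : αAB = αBA)
    (hrep : ∀ N : ℕ, ∀ hN : 2 ≤ N, NDensityRep N hN (twoSitePair A B αAA αAB αBA αBB)) :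
    αAB + αBA ≤ 2 * (αAA + αAB) * (αBB + αBA) := by
  set q : ℝ := αBA + αBB with hqdef
  have hq0 : 0 ≤ q := by positivity
  -- The per-N inequality, in the convenient linear form
  have key : ∀ N : ℕ, 2 ≤ N → (N : ℝ) * (q^2 - αBB) ≤ q - αBB := by
    intro N hN
    obtain ⟨pN, hprob, hsymM, hmarg⟩ := hrep N hN
    haveI := hprob
    -- two-point marginals in all pairs of coordinates
    have hpair : ∀ i j : Fin N, i ≠ j →
        pN.map (fun x => (x i, x j)) = twoSitePair A B αAA αAB αBA αBB := by
      intro i j hij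
      rw [aux_map_pair_eq hN pN hsymM i j hij, hmarg]
    have hmeas_pair : ∀ i j : Fin N, Measurable (fun x : Fin N → R3 => (x i, x j)) :=
      fun i j => (measurable_pi_apply i).prodMk (measurable_pi_apply j)
    have hpick : ∀ i : Fin N, ∃ j : Fin N, i ≠ j := by
      intro i
      rcases eq_or_ne i ⟨0, by omega⟩ with h | h
      · exact ⟨⟨1, by omega⟩, by rw [h]; simp [Fin.ext_iff]⟩
      · exact ⟨⟨0, by omega⟩, h⟩
    have h1 : ∀ i : Fin N, pN {x | x i = B} = ENNReal.ofReal q := by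
      intro i
      obtain ⟨j, hij⟩ := hpick i
      have := Measure.map_apply (μ := pN) (hmeas_pair i j) (aux_meas1 (B := B))
      rw [hpair i j hij, aux_tsp1 A B hAB αAA αAB αBA αBB hBA hBB] at this
      exact this.symm
    have h2 : ∀ i j : Fin N, i ≠ j →
        pN {x | x i = B ∧ x j = B} = ENNReal.ofReal αBB := by
      intro i j hij
      have := Measure.map_apply (μ := pN) (hmeas_pair i j) (aux_meas2 (B := B))
      rw [hpair i j hij, aux_tsp2 A B hAB αAA αAB αBA αBB] at this
      exact this.symm
    have hkey := aux_keyN hN B pN q αBB hq0 hBB h1 h2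
    have hNpos : (0 : ℝ) < N := by positivity
    nlinarith [hkey, hNpos]
  -- Pass to the limit N → ∞
  have hqb : q^2 ≤ αBB := by
    by_contra h
    push_neg at h
    have hε : 0 < q^2 - αBB := by linarith
    obtain ⟨n, hn⟩ := exists_nat_gt ((q - αBB) / (q^2 - αBB))
    set M : ℕ := max n 2 with hM
    have hM2 : 2 ≤ M := le_max_right _ _
    have hMn : (n : ℝ) ≤ M := by exact_mod_cast le_max_left n 2
    have hkM := key M hM2
    have : (M : ℝ) ≤ (q - αBB) / (q^2 - αBB) := by
      rw [le_div_iff₀ hε]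
      linarith [hkM]
    linarith [hn, hMn]
  nlinarith [hqb]

end
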